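/- Let f : I → [0,∞) be three times differentiable on the interior of interval I containing [a,b] with a < b, with f''' integrable on [a,b], and suppose |f'''| is log-convex on [a,b] with |f'''(a)|, |f'''(b)| positive and distinct at every pair of partition points. Let a = x₀ < x₁ < ... < xₙ = b be a partition and M(f,d) = Σ_{i=0}^{n−1} f((x_i + x_{i+1})/2)·(x_{i+1} − x_i). Assume f''((x_i + x_{i+1})/2) = 0 for each i, and |f'''(x_i)|, |f'''(x_{i+1})| are positive and distinct for each i. Then |∫_a^b f(x) dx − M(f,d)| ≤ Σ_{i=0}^{n−1} ((x_{i+1} − x_i)⁴/96)·(|f'''(x_{i+1})|·μ(K_i) + |f'''(x_i)|·μ(M_i)), where K_i = |f'''(x_i)|/|f'''(x_{i+1})|, M_i = |f'''(x_{i+1})|/|f'''(x_i)|, and μ(c) = 2·c^{1/2}·(ln c − 6)/(ln c)² + 48·c^{1/2}·(ln c − 2)/(ln c)⁴ + 96/(ln c)⁴. -/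

import Mathlib

/-!
Taylor's formula with integral remainder, expanded at the midpoint `m` of a cell `[c, d]` of
half-length `h`, gives `∫_c^d f - f(m)(d - c)` as `h⁴/6` times the difference of
`∫₀¹ u³ f'''(d - h u) du` and `∫₀¹ u³ f'''(c + h u) du`: the first-order terms cancel by symmetry
and the second-order ones vanish because `f''(m) = 0`. On the segment from `c` towards `d`,
log-convexity bounds `|f'''|` by the exponential interpolation `|f'''(c)| r^(u/2)` with
`r = |f'''(d)| / |f'''(c)|`, and `mu r = ∫₀¹ u³ r^(u/2) du`. Summing over the cells gives the estimate.
-/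

open MeasureTheory intervalIntegral

noncomputable def mu (c : ℝ) : ℝ :=
  2 * c ^ ((1:ℝ)/2) * (Real.log c - 6) / (Real.log c) ^ 2
    + 48 * c ^ ((1:ℝ)/2) * (Real.log c - 2) / (Real.log c) ^ 4
    + 96 / (Real.log c) ^ 4

theorem integral_sub_pow_succ_mul_deriv {g g' : ℝ → ℝ} {p q : ℝ} (k : ℕ)
    (hg : ∀ x ∈ Set.uIcc p q, HasDerivAt g (g' x) x) (hg' : IntervalIntegrable g' volume p q) :
    ∫ s in p..q, (s - p) ^ (k + 1) * g' s =
      (q - p) ^ (k + 1) * g q - (k + 1) * ∫ s in p..q, (s - p) ^ k * g s := by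
  have hpow : ∀ x ∈ Set.uIcc p q,
      HasDerivAt (fun s => (s - p) ^ (k + 1)) ((k + 1) * (x - p) ^ k) x := fun x _ => by
    simpa using ((hasDerivAt_id' x).sub_const p).fun_pow (k + 1)
  rw [integral_mul_deriv_eq_deriv_mul hpow hg (Continuous.intervalIntegrable (by fun_prop) _ _) hg',
    sub_self, zero_pow k.succ_ne_zero, zero_mul, sub_zero, ← intervalIntegral.integral_const_mul]
  simp only [mul_assoc]

theorem integral_eq_taylor_sub_remainder {f f' f'' f''' : ℝ → ℝ} {p q : ℝ}
    (hf : ∀ x ∈ Set.uIcc p q, HasDerivAt f (f' x) x)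
    (hf' : ∀ x ∈ Set.uIcc p q, HasDerivAt f' (f'' x) x)
    (hf'' : ∀ x ∈ Set.uIcc p q, HasDerivAt f'' (f''' x) x)
    (hint : IntervalIntegrable f''' volume p q) :
    ∫ s in p..q, f s = (q - p) * f q - (q - p) ^ 2 / 2 * f' q + (q - p) ^ 3 / 6 * f'' q
      - (1 / 6) * ∫ s in p..q, (s - p) ^ 3 * f''' s := by
  have hintegrable : ∀ {g g' : ℝ → ℝ}, (∀ x ∈ Set.uIcc p q, HasDerivAt g (g' x) x) →
      IntervalIntegrable g volume p q := fun hg =>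
    ContinuousOn.intervalIntegrable fun x hx => (hg x hx).continuousAt.continuousWithinAt
  have h3 := integral_sub_pow_succ_mul_deriv 2 hf'' hint
  have h2 := integral_sub_pow_succ_mul_deriv 1 hf' (hintegrable hf'')
  have h1 := integral_sub_pow_succ_mul_deriv 0 hf (hintegrable hf')
  simp only [pow_zero, one_mul, zero_add, pow_one] at h1 h2
  push_cast at h3 h2
  rw [h3, h2, h1]
  ring

theorem integral_sub_pow_mul_eq_integral_comp (g : ℝ → ℝ) (p q : ℝ) (k : ℕ) :
    ∫ s in p..p + q, (s - p) ^ k * g s = q ^ (k + 1) * ∫ u in (0:ℝ)..1, u ^ k * g (p + q * u) := by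
  have := smul_integral_comp_add_mul (fun s => (s - p) ^ k * g s) (a := 0) (b := 1) q p
  simp only [mul_zero, add_zero, mul_one, add_sub_cancel_left, smul_eq_mul] at this
  rw [← this, pow_succ', mul_assoc, ← intervalIntegral.integral_const_mul (q ^ k)]
  refine congrArg (q * ·) (integral_congr fun u _ => ?_)
  simp only [mul_pow, mul_assoc]

theorem integral_sub_midpoint_mul_eq {f f' f'' f''' : ℝ → ℝ} {c d : ℝ}
    (hf : ∀ x ∈ Set.uIcc c d, HasDerivAt f (f' x) x)
    (hf' : ∀ x ∈ Set.uIcc c d, HasDerivAt f' (f'' x) x)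
    (hf'' : ∀ x ∈ Set.uIcc c d, HasDerivAt f'' (f''' x) x)
    (hint : IntervalIntegrable f''' volume c d) (hm : f'' ((c + d) / 2) = 0) :
    (∫ t in c..d, f t) - f ((c + d) / 2) * (d - c) = ((d - c) / 2) ^ 4 / 6 *
      ((∫ u in (0:ℝ)..1, u ^ 3 * f''' (d + (c - d) / 2 * u))
        - ∫ u in (0:ℝ)..1, u ^ 3 * f''' (c + (d - c) / 2 * u)) := by
  set m := (c + d) / 2
  have hc : m = c + (d - c) / 2 := by ring
  have hd : m = d + (c - d) / 2 := by ring
  have hm_mem : m ∈ Set.uIcc c d := by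
    rcases le_total c d with h | h
    · exact Set.mem_uIcc_of_le (by linarith) (by linarith)
    · exact Set.mem_uIcc_of_ge (by linarith) (by linarith)
  have hsubc : Set.uIcc c m ⊆ Set.uIcc c d := Set.uIcc_subset_uIcc Set.left_mem_uIcc hm_mem
  have hsubd : Set.uIcc d m ⊆ Set.uIcc c d := Set.uIcc_subset_uIcc Set.right_mem_uIcc hm_mem
  have hcont : IntervalIntegrable f volume c d :=
    ContinuousOn.intervalIntegrable fun x hx => (hf x hx).continuousAt.continuousWithinAt
  have htc := integral_eq_taylor_sub_remainder (fun x hx => hf x (hsubc hx)) (fun x hx => hf' x (hsubc hx))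
    (fun x hx => hf'' x (hsubc hx)) (hint.mono_set hsubc)
  have htd := integral_eq_taylor_sub_remainder (fun x hx => hf x (hsubd hx)) (fun x hx => hf' x (hsubd hx))
    (fun x hx => hf'' x (hsubd hx)) (hint.mono_set hsubd)
  rw [← integral_add_adjacent_intervals (hcont.mono_set hsubc) (hcont.mono_set hsubd).symm,
    integral_symm d m, htc, htd, hm]
  have hrc : ∫ s in c..m, (s - c) ^ 3 * f''' s =
      ((d - c) / 2) ^ 4 * ∫ u in (0:ℝ)..1, u ^ 3 * f''' (c + (d - c) / 2 * u) := by
    rw [hc]; exact integral_sub_pow_mul_eq_integral_comp f''' c _ 3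
  have hrd : ∫ s in d..m, (s - d) ^ 3 * f''' s =
      ((c - d) / 2) ^ 4 * ∫ u in (0:ℝ)..1, u ^ 3 * f''' (d + (c - d) / 2 * u) := by
    rw [hd]; exact integral_sub_pow_mul_eq_integral_comp f''' d _ 3
  rw [hrc, hrd, hc]
  ring

theorem integral_pow_three_mul_exp {k : ℝ} (hk : k ≠ 0) :
    ∫ u in (0:ℝ)..1, u ^ 3 * Real.exp (k * u) =
      Real.exp k * (1 / k - 3 / k ^ 2 + 6 / k ^ 3 - 6 / k ^ 4) + 6 / k ^ 4 := by
  have hderiv : ∀ u ∈ Set.uIcc (0:ℝ) 1, HasDerivAt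
      (fun u => Real.exp (k * u) * (u ^ 3 / k - 3 * u ^ 2 / k ^ 2 + 6 * u / k ^ 3 - 6 / k ^ 4))
      (u ^ 3 * Real.exp (k * u)) u := by
    intro u _
    have hexp : HasDerivAt (fun u => Real.exp (k * u)) (Real.exp (k * u) * k) u := by
      simpa using ((hasDerivAt_id u).const_mul k).exp
    have hpoly : HasDerivAt (fun u => u ^ 3 / k - 3 * u ^ 2 / k ^ 2 + 6 * u / k ^ 3 - 6 / k ^ 4)
        (3 * u ^ 2 / k - 6 * u / k ^ 2 + 6 / k ^ 3) u := by
      have := ((((hasDerivAt_pow 3 u).div_const k).sub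
        (((hasDerivAt_pow 2 u).const_mul 3).div_const (k ^ 2))).add
        (((hasDerivAt_id u).const_mul 6).div_const (k ^ 3))).sub_const (6 / k ^ 4)
      exact this.congr_deriv (by ring)
    exact (hexp.mul hpoly).congr_deriv (by field_simp; ring)
  rw [integral_eq_sub_of_hasDerivAt hderiv (Continuous.intervalIntegrable (by fun_prop) _ _)]
  simp only [mul_one, mul_zero, Real.exp_zero]
  ring

theorem mu_eq_integral {c : ℝ} (hc : 0 < c) (hc1 : c ≠ 1) :
    mu c = ∫ u in (0:ℝ)..1, u ^ 3 * c ^ (u / 2) := by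
  have hlog : Real.log c ≠ 0 := Real.log_ne_zero_of_pos_of_ne_one hc hc1
  have hrpow : ∀ u : ℝ, c ^ (u / 2) = Real.exp (Real.log c / 2 * u) := fun u => by
    rw [Real.rpow_def_of_pos hc]; ring_nf
  simp_rw [hrpow, integral_pow_three_mul_exp (div_ne_zero hlog two_ne_zero), mu, hrpow]
  field_simp
  ring

def LogConvexOn (s : Set ℝ) (g : ℝ → ℝ) : Prop :=
  ∀ x ∈ s, ∀ y ∈ s, ∀ α ∈ Set.Icc (0:ℝ) 1, g (α * x + (1 - α) * y) ≤ g x ^ α * g y ^ (1 - α)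

theorem LogConvexOn.le_mul_div_rpow {s : Set ℝ} {g : ℝ → ℝ} (hg : LogConvexOn s g) {x y t : ℝ}
    (hx : x ∈ s) (hy : y ∈ s) (hgx : 0 < g x) (hgy : 0 ≤ g y) (ht : t ∈ Set.Icc (0:ℝ) 1) :
    g (x + t * (y - x)) ≤ g x * (g y / g x) ^ t := by
  have h := hg x hx y hy (1 - t) ⟨by linarith [ht.2], by linarith [ht.1]⟩
  rw [sub_sub_cancel, Real.rpow_sub hgx, Real.rpow_one] at h
  rw [show x + t * (y - x) = (1 - t) * x + t * y by ring, Real.div_rpow hgy hgx.le]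
  exact h.trans_eq (by ring)

theorem abs_integral_pow_three_mul_le_mu {s : Set ℝ} {g : ℝ → ℝ}
    (hg : LogConvexOn s fun t => |g t|) {x y : ℝ} (hx : x ∈ s) (hy : y ∈ s)
    (hgx : 0 < |g x|) (hgy : 0 < |g y|) (hxy : |g x| ≠ |g y|) :
    |∫ u in (0:ℝ)..1, u ^ 3 * g (x + (y - x) / 2 * u)| ≤ |g x| * mu (|g y| / |g x|) := by
  have hr : 0 < |g y| / |g x| := div_pos hgy hgx
  rw [mu_eq_integral hr (div_ne_one_of_ne hxy.symm), ← intervalIntegral.integral_const_mul]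
  refine (Real.norm_eq_abs _).symm.trans_le (norm_integral_le_of_norm_le zero_le_one
    (ae_of_all _ fun u hu => ?_) (Continuous.intervalIntegrable ?_ _ _))
  · have hu' : u / 2 ∈ Set.Icc (0:ℝ) 1 := ⟨by linarith [hu.1], by linarith [hu.2]⟩
    have hbound := hg.le_mul_div_rpow hx hy hgx hgy.le hu'
    rw [Real.norm_eq_abs, abs_mul, abs_of_nonneg (pow_nonneg hu.1.le 3)]
    calc u ^ 3 * |g (x + (y - x) / 2 * u)| = u ^ 3 * |g (x + u / 2 * (y - x))| := by ring_nf
      _ ≤ u ^ 3 * (|g x| * (|g y| / |g x|) ^ (u / 2)) :=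
        mul_le_mul_of_nonneg_left hbound (pow_nonneg hu.1.le 3)
      _ = |g x| * (u ^ 3 * (|g y| / |g x|) ^ (u / 2)) := by ring
  · exact continuous_const.mul ((continuous_pow 3).mul
      ((Real.continuous_const_rpow hr.ne').comp (continuous_id.div_const 2)))

theorem abs_integral_sub_midpoint_mul_le {f f' f'' f''' : ℝ → ℝ} {c d : ℝ} {s : Set ℝ}
    (hf : ∀ x ∈ Set.uIcc c d, HasDerivAt f (f' x) x)
    (hf' : ∀ x ∈ Set.uIcc c d, HasDerivAt f' (f'' x) x)
    (hf'' : ∀ x ∈ Set.uIcc c d, HasDerivAt f'' (f''' x) x)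
    (hint : IntervalIntegrable f''' volume c d) (hm : f'' ((c + d) / 2) = 0)
    (hlog : LogConvexOn s fun t => |f''' t|) (hcs : c ∈ s) (hds : d ∈ s)
    (hc : 0 < |f''' c|) (hd : 0 < |f''' d|) (hcd : |f''' c| ≠ |f''' d|) :
    |(∫ t in c..d, f t) - f ((c + d) / 2) * (d - c)|
      ≤ (d - c) ^ 4 / 96 * (|f''' d| * mu (|f''' c| / |f''' d|)
          + |f''' c| * mu (|f''' d| / |f''' c|)) := by
  rw [integral_sub_midpoint_mul_eq hf hf' hf'' hint hm, abs_mul,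
    abs_of_nonneg (by positivity)]
  calc ((d - c) / 2) ^ 4 / 6 * |(∫ u in (0:ℝ)..1, u ^ 3 * f''' (d + (c - d) / 2 * u))
        - ∫ u in (0:ℝ)..1, u ^ 3 * f''' (c + (d - c) / 2 * u)|
      ≤ ((d - c) / 2) ^ 4 / 6 * (|∫ u in (0:ℝ)..1, u ^ 3 * f''' (d + (c - d) / 2 * u)|
        + |∫ u in (0:ℝ)..1, u ^ 3 * f''' (c + (d - c) / 2 * u)|) := by
        gcongr; exact abs_sub _ _
    _ ≤ ((d - c) / 2) ^ 4 / 6 * (|f''' d| * mu (|f''' c| / |f''' d|)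
          + |f''' c| * mu (|f''' d| / |f''' c|)) := by
        gcongr
        · exact abs_integral_pow_three_mul_le_mu hlog hds hcs hd hc hcd.symm
        · exact abs_integral_pow_three_mul_le_mu hlog hcs hds hc hd hcd
    _ = _ := by ring

theorem midpoint_error_estimate_general
    (I : Set ℝ)
    (f f' f'' f''' : ℝ → ℝ)
    (a b : ℝ) (hsub : Set.Icc a b ⊆ interior I)
    (hf' : ∀ x ∈ interior I, HasDerivAt f (f' x) x)
    (hf'' : ∀ x ∈ interior I, HasDerivAt f' (f'' x) x)
    (hf''' : ∀ x ∈ interior I, HasDerivAt f'' (f''' x) x)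
    (hint : IntegrableOn f''' (Set.Icc a b))
    (hlog : ∀ x ∈ Set.Icc a b, ∀ y ∈ Set.Icc a b, ∀ α ∈ Set.Icc (0:ℝ) 1,
      |f''' (α * x + (1 - α) * y)| ≤ |f''' x| ^ α * |f''' y| ^ (1 - α))
    (n : ℕ) (x : ℕ → ℝ)
    (hx0 : x 0 = a) (hxn : x n = b)
    (hmono : ∀ i < n, x i < x (i + 1))
    (hmid : ∀ i < n, f'' ((x i + x (i + 1)) / 2) = 0)
    (hpos : ∀ i ≤ n, 0 < |f''' (x i)|)
    (hne : ∀ i < n, |f''' (x i)| ≠ |f''' (x (i + 1))|) :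
    |(∫ t in a..b, f t)
        - ∑ i ∈ Finset.range n, f ((x i + x (i + 1)) / 2) * (x (i + 1) - x i)|
    ≤ ∑ i ∈ Finset.range n, ((x (i + 1) - x i) ^ 4 / 96) *
        (|f''' (x (i + 1))| * mu (|f''' (x i)| / |f''' (x (i + 1))|)
          + |f''' (x i)| * mu (|f''' (x (i + 1))| / |f''' (x i)|)) := by
  have hx : MonotoneOn x (Set.Iic n) := (strictMonoOn_of_lt_add_one Set.ordConnected_Iic
    fun i _ _ hi => hmono i (Nat.lt_of_succ_le hi)).monotoneOn
  have hmem : ∀ i ≤ n, x i ∈ Set.Icc a b := fun i hi =>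
    ⟨hx0 ▸ hx (Nat.zero_le n) hi (Nat.zero_le i), hxn ▸ hx hi (le_refl n) hi⟩
  have hpiece : ∀ i < n, Set.uIcc (x i) (x (i + 1)) ⊆ Set.Icc a b := fun i hi =>
    Set.uIcc_subset_Icc (hmem i hi.le) (hmem (i + 1) hi)
  have hderiv : ∀ {g g' : ℝ → ℝ}, (∀ y ∈ interior I, HasDerivAt g (g' y) y) →
      ∀ i < n, ∀ y ∈ Set.uIcc (x i) (x (i + 1)), HasDerivAt g (g' y) y :=
    fun hg i hi y hy => hg y (hsub (hpiece i hi hy))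
  have hfint : ∀ i < n, IntervalIntegrable f volume (x i) (x (i + 1)) := fun i hi =>
    ContinuousOn.intervalIntegrable fun y hy => (hderiv hf' i hi y hy).continuousAt.continuousWithinAt
  rw [← hx0, ← hxn, ← sum_integral_adjacent_intervals hfint, ← Finset.sum_sub_distrib]
  refine (Finset.abs_sum_le_sum_abs _ _).trans (Finset.sum_le_sum fun i hi => ?_)
  have hi : i < n := Finset.mem_range.mp hi
  exact abs_integral_sub_midpoint_mul_le (hderiv hf' i hi) (hderiv hf'' i hi) (hderiv hf''' i hi)
    ((hint.mono_set (hpiece i hi)).intervalIntegrable) (hmid i hi) hlog (hmem i hi.le)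
    (hmem (i + 1) hi) (hpos i hi.le) (hpos (i + 1) hi) (hne i hi)

theorem midpoint_error_estimate
    (I : Set ℝ) (hI : I.OrdConnected)
    (f f' f'' f''' : ℝ → ℝ)
    (hfpos : ∀ x ∈ I, 0 ≤ f x)
    (a b : ℝ) (hab : a < b) (hsub : Set.Icc a b ⊆ interior I)
    (hf' : ∀ x ∈ interior I, HasDerivAt f (f' x) x)
    (hf'' : ∀ x ∈ interior I, HasDerivAt f' (f'' x) x)
    (hf''' : ∀ x ∈ interior I, HasDerivAt f'' (f''' x) x)
    (hint : IntegrableOn f''' (Set.Icc a b))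
    (hlog : ∀ x ∈ Set.Icc a b, ∀ y ∈ Set.Icc a b, ∀ α ∈ Set.Icc (0:ℝ) 1,
      |f''' (α * x + (1 - α) * y)| ≤ |f''' x| ^ α * |f''' y| ^ (1 - α))
    (n : ℕ) (hn : 0 < n) (x : ℕ → ℝ)
    (hx0 : x 0 = a) (hxn : x n = b)
    (hmono : ∀ i < n, x i < x (i + 1))
    (hmid : ∀ i < n, f'' ((x i + x (i + 1)) / 2) = 0)
    (hpos : ∀ i ≤ n, 0 < |f''' (x i)|)
    (hne : ∀ i < n, |f''' (x i)| ≠ |f''' (x (i + 1))|) :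
    |(∫ t in a..b, f t)
        - ∑ i ∈ Finset.range n, f ((x i + x (i + 1)) / 2) * (x (i + 1) - x i)|
    ≤ ∑ i ∈ Finset.range n, ((x (i + 1) - x i) ^ 4 / 96) *
        (|f''' (x (i + 1))| * mu (|f''' (x i)| / |f''' (x (i + 1))|)
          + |f''' (x i)| * mu (|f''' (x (i + 1))| / |f''' (x i)|)) :=
  midpoint_error_estimate_general I f f' f'' f''' a b hsub hf' hf'' hf''' hint hlog n x hx0 hxn
    hmono hmid hpos hne
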